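/- arXiv:1612.08838 — 3 statements merged into one kernel-verified Lean document; each statement's English description precedes it below -/
import Mathlib

section
/- Let τ be a measurable cardinal and U a τ-complete free ultrafilter on τ. Then the space X = τ ∪ {U} ⊆ βτ is not κ-metrizable: no function ρ' : X × RC(X) → [0,∞) satisfies (K1)–(K4). In particular there exists a countably κ-metrizable space that is not κ-metrizable (assuming a measurable cardinal exists). -/
open Set Topology

section Defs

variable {X : Type*}

/-- A set is regular closed if it equals the closure of its interior. -/
def IsRegClosed [TopologicalSpace X] (C : Set X) : Prop := closure (interior C) = C

/-- A set is regular open if it equals the interior of its closure. -/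
def IsRegOpen [TopologicalSpace X] (V : Set X) : Prop := interior (closure V) = V

/-- A countable κ-metric: axioms (K1)-(K3) and (K4_ω). -/
structure IsCountKappaMetric [TopologicalSpace X] (ρ : X → Set X → ℝ) : Prop where
  nonneg : ∀ x C, IsRegClosed C → 0 ≤ ρ x C
  k1 : ∀ x C, IsRegClosed C → (ρ x C = 0 ↔ x ∈ C)
  k2 : ∀ x C D, IsRegClosed C → IsRegClosed D → C ⊆ D → ρ x D ≤ ρ x C
  k3 : ∀ C, IsRegClosed C → Continuous fun x => ρ x C
  k4omega : ∀ C : ℕ → Set X, (∀ n, IsRegClosed (C n)) → (∀ n, C n ⊆ C (n + 1)) →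
    ∀ x, ρ x (closure (⋃ n, C n)) = ⨅ n, ρ x (C n)

/-- Axiom (K4): the infimum identity for arbitrary nonempty totally ordered
(by inclusion) families of regular closed sets. -/
def K4Chains [TopologicalSpace X] (ρ : X → Set X → ℝ) : Prop :=
  ∀ 𝒞 : Set (Set X), 𝒞.Nonempty → (∀ C ∈ 𝒞, IsRegClosed C) →
    (∀ C ∈ 𝒞, ∀ D ∈ 𝒞, C ⊆ D ∨ D ⊆ C) →
    ∀ x, ρ x (closure (⋃₀ 𝒞)) = sInf ((ρ x) '' 𝒞)

/-- A (full) κ-metric: axioms (K1)-(K4). -/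
structure IsKappaMetric [TopologicalSpace X] (ρ : X → Set X → ℝ)
    extends IsCountKappaMetric ρ : Prop where
  k4 : K4Chains ρ

/-- Countable chain condition. -/
def CCCSpace (X : Type*) [TopologicalSpace X] : Prop :=
  ∀ 𝒪 : Set (Set X), (∀ U ∈ 𝒪, IsOpen U ∧ U.Nonempty) →
    𝒪.PairwiseDisjoint id → 𝒪.Countable

/-- Pseudocompactness: every continuous real-valued function is bounded. -/
def Pseudocompact (X : Type*) [TopologicalSpace X] : Prop :=
  ∀ f : X → ℝ, Continuous f → ∃ M, ∀ x, |f x| ≤ M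

/-- d-open maps. -/
def IsDOpen {Y : Type*} [TopologicalSpace X] [TopologicalSpace Y] (f : X → Y) : Prop :=
  ∀ U : Set X, IsOpen U → f '' U ⊆ interior (closure (f '' U))

/-- Q-admissible families of regular open sets with respect to ρ. -/
def QAdmissible [TopologicalSpace X] (ρ : X → Set X → ℝ) (P : Set (Set X)) : Prop :=
  (∀ V ∈ P, IsRegOpen V) ∧
  (∀ V ∈ P, ∀ q : ℚ,
    interior ((fun x => ρ x (closure V)) ⁻¹' Iic (q : ℝ)) ∈ P ∧
    interior ((fun x => ρ x (closure V)) ⁻¹' Ici (q : ℝ)) ∈ P) ∧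
  (∀ V ∈ P, interior Vᶜ ∈ P) ∧
  (∀ U ∈ P, ∀ V ∈ P, U ∩ V ∈ P ∧ interior (closure (U ∪ V)) ∈ P)

/-- The equivalence relation ∼_P. -/
def pSetoid (P : Set (Set X)) : Setoid X where
  r x y := ∀ V ∈ P, (x ∈ V ↔ y ∈ V)
  iseqv := ⟨fun _ _ _ => Iff.rfl, fun h V hV => (h V hV).symm,
    fun h1 h2 V hV => (h1 V hV).trans (h2 V hV)⟩

/-- The quotient X_P. -/
def XP (P : Set (Set X)) : Type _ := Quotient (pSetoid P)

/-- The quotient map q : X → X_P. -/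
def qP (P : Set (Set X)) : X → XP P := Quotient.mk (pSetoid P)

/-- The topology on X_P generated by images of members of P. -/
def topXP [TopologicalSpace X] (P : Set (Set X)) : TopologicalSpace (XP P) :=
  TopologicalSpace.generateFrom ((fun V => qP P '' V) '' P)

end Defs

section Ult

variable {τ : Type*} (U : Ultrafilter τ)

/-- The space X = τ ∪ {U} ⊆ βτ, as a subspace of the space of ultrafilters on
the discrete space τ. -/
def UltSp : Type _ := {u : Ultrafilter τ // (∃ a, u = pure a) ∨ u = U}

instance : TopologicalSpace (UltSp U) :=
  instTopologicalSpaceSubtype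

/-- The point of X corresponding to the ultrafilter U. -/
def UltSp.pt : UltSp U := ⟨U, Or.inr rfl⟩

/-- The point of X corresponding to an element a of τ. -/
def UltSp.ofBase (a : τ) : UltSp U := ⟨pure a, Or.inl ⟨a, rfl⟩⟩

/-- "C ∩ τ ∈ U", for a subset C of X. -/
def UltSp.traceMem (C : Set (UltSp U)) : Prop := {a : τ | UltSp.ofBase U a ∈ C} ∈ U

/-- U is a free ultrafilter. -/
def UltSp.Free : Prop := ∀ a : τ, U ≠ pure a

/-- The indicator "κ-metric" ρ(x,C) = 0 iff x ∈ C, else 1. -/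
noncomputable def UltSp.rho : UltSp U → Set (UltSp U) → ℝ :=
  fun x C => Cᶜ.indicator (fun _ => (1 : ℝ)) x

end Ult

/-!
The indicator `ρ(x, C) = [x ∉ C]` is a countable κ-metric on `X = τ ∪ {U}`: a `U`-null open set
is already closed, so closures of open sets are open and every regular closed set is clopen;
and σ-completeness of `U` makes countable intersections of open sets open, so countable unions
of regular closed sets stay closed.

No κ-metric exists. Well-order `τ` in type `#τ`; the initial segments `C_α` form a chain of
clopen sets missing `U` whose union `τ` is dense at `U`. By τ-completeness each `C_α` is
`U`-null, so by σ-completeness every countable subfamily is bounded in the chain. (K4) gives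
`inf_α ρ(U, C_α) = ρ(U, X) = 0`; a sequence `α_n` realising this infimum is bounded by some `β`,
and (K2) gives `ρ(U, C_β) = 0`, i.e. `U ∈ C_β` by (K1), which is absurd.
-/

section KappaMetric

variable {X : Type*} [TopologicalSpace X]

theorem IsOpen.isRegClosed_closure {W : Set X} (hW : IsOpen W) : IsRegClosed (closure W) :=
  ((closure_mono interior_subset).trans_eq closure_closure).antisymm
    (closure_mono (hW.subset_interior_iff.mpr subset_closure))

theorem IsClopen.isRegClosed {C : Set X} (hC : IsClopen C) : IsRegClosed C := by
  rw [IsRegClosed, hC.isOpen.interior_eq, hC.isClosed.closure_eq]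

theorem isRegClosed_closure_iUnion {ι : Sort*} {C : ι → Set X} (hC : ∀ i, IsRegClosed (C i)) :
    IsRegClosed (closure (⋃ i, C i)) := by
  have h : closure (⋃ i, C i) = closure (⋃ i, interior (C i)) :=
    (closure_minimal (iUnion_subset fun i => (hC i).ge.trans
        (closure_mono (subset_iUnion (fun i => interior (C i)) i))) isClosed_closure).antisymm
      (closure_mono (iUnion_mono fun i => interior_subset))
  rw [h]
  exact (isOpen_iUnion fun i => isOpen_interior).isRegClosed_closure

theorem isCountKappaMetric_indicator_compl
    (hclopen : ∀ C : Set X, IsRegClosed C → IsClopen C)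
    (hunion : ∀ C : ℕ → Set X, (∀ n, IsClosed (C n)) → IsClosed (⋃ n, C n)) :
    IsCountKappaMetric fun (x : X) C => Cᶜ.indicator (fun _ => (1 : ℝ)) x where
  nonneg x _ _ := indicator_nonneg (fun _ _ => zero_le_one) x
  k1 x C _ := by by_cases hx : x ∈ C <;> simp [hx]
  k2 x _ _ _ _ hCD := indicator_le_indicator_of_subset (compl_subset_compl.2 hCD)
    (fun _ => zero_le_one) x
  k3 C hC := (hclopen C hC).compl.continuous_indicator continuous_const
  k4omega C hC _ x := by
    rw [(hunion C fun n => (hclopen _ (hC n)).isClosed).closure_eq]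
    by_cases hx : ∃ n, x ∈ C n
    · obtain ⟨n, hn⟩ := hx
      have h0 : ∀ {D : Set X}, x ∈ D → Dᶜ.indicator (fun _ => (1 : ℝ)) x = 0 :=
        fun hD => indicator_of_notMem (not_not_intro hD) _
      rw [h0 (mem_iUnion.2 ⟨n, hn⟩)]
      have hleast : IsLeast (range fun m => (C m)ᶜ.indicator (fun _ => (1 : ℝ)) x) 0 :=
        ⟨⟨n, h0 hn⟩, forall_mem_range.2 fun _ => indicator_nonneg (fun _ _ => zero_le_one) x⟩
      exact hleast.isGLB.ciInf_eq.symm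
    · rw [not_exists] at hx
      simp [hx]

theorem IsKappaMetric.exists_mem_of_mem_closure_iUnion {ι : Type*} [LinearOrder ι] [Nonempty ι]
    {ρ : X → Set X → ℝ} (hρ : IsKappaMetric ρ) {C : ι → Set X} (hC : ∀ i, IsRegClosed (C i))
    (hmono : Monotone C) (hbdd : ∀ a : ℕ → ι, BddAbove (range a)) {x : X}
    (hx : x ∈ closure (⋃ i, C i)) : ∃ i, x ∈ C i := by
  have hinf : ⨅ i, ρ x (C i) = 0 := by
    have h := hρ.k4 (range C) (range_nonempty C) (forall_mem_range.2 hC)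
      (forall_mem_range.2 fun i => forall_mem_range.2 fun j =>
        (le_total i j).imp (fun h => hmono h) (fun h => hmono h)) x
    rw [sUnion_range, (hρ.k1 x _ (isRegClosed_closure_iUnion hC)).2 hx, ← range_comp] at h
    exact h.symm
  have happrox : ∀ n : ℕ, ∃ i, ρ x (C i) < 1 / (n + 1) := fun n =>
    exists_lt_of_ciInf_lt (hinf ▸ Nat.one_div_pos_of_nat)
  choose a ha using happrox
  obtain ⟨i, hi⟩ := hbdd a
  have hle : ∀ n : ℕ, ρ x (C i) < 1 / (n + 1) := fun n =>
    (hρ.k2 x _ _ (hC _) (hC _) (hmono (hi (mem_range_self n)))).trans_lt (ha n)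
  refine ⟨i, (hρ.k1 x _ (hC i)).1 (le_antisymm (le_of_not_gt fun hpos => ?_)
    (hρ.nonneg x _ (hC i)))⟩
  obtain ⟨n, hn⟩ := exists_nat_one_div_lt hpos
  exact (hle n).not_gt hn

end KappaMetric

section UltSpace

open Cardinal Filter

theorem Ultrafilter.countableInterFilter_of_complete {τ : Type*} {U : Ultrafilter τ}
    (huncount : ℵ₀ < #τ)
    (hcomplete : ∀ 𝒜 : Set (Set τ), (∀ A ∈ 𝒜, A ∈ U) → #𝒜 < #τ → ⋂₀ 𝒜 ∈ U) :
    CountableInterFilter (U : Filter τ) :=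
  ⟨fun S hS hmem => hcomplete S hmem (hS.le_aleph0.trans_lt huncount)⟩

theorem Ultrafilter.bddAbove_range_of_preimage_Iic_notMem {τ ι : Type*} [LinearOrder ι]
    {U : Ultrafilter τ} [CountableInterFilter (U : Filter τ)] {f : τ → ι}
    (hf : ∀ i, f ⁻¹' Iic i ∉ U) (a : ℕ → ι) : BddAbove (range a) := by
  have h : (⋃ n, f ⁻¹' Iic (a n))ᶜ ∈ U := by
    rw [compl_iUnion]
    exact countable_iInter_mem.2 fun n => Ultrafilter.compl_mem_iff_notMem.2 (hf (a n))
  obtain ⟨b, hb⟩ := Ultrafilter.nonempty_of_mem h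
  exact ⟨f b, forall_mem_range.2 fun n => le_of_not_ge fun h => hb (mem_iUnion.2 ⟨n, h⟩)⟩

namespace UltSp

variable {τ : Type*} {U : Ultrafilter τ}

theorem ofBase_injective : Function.Injective (ofBase U) := fun _ _ h =>
  Ultrafilter.pure_injective (congrArg Subtype.val h)

theorem eq_pt_or_eq_ofBase (x : UltSp U) : x = pt U ∨ ∃ a, x = ofBase U a := by
  rcases x with ⟨u, ⟨a, rfl⟩ | rfl⟩
  · exact Or.inr ⟨a, rfl⟩
  · exact Or.inl rfl

theorem pt_ne_ofBase (hfree : Free U) (a : τ) : pt U ≠ ofBase U a := fun h =>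
  hfree a (congrArg Subtype.val h)

theorem singleton_notMem (hfree : Free U) (a : τ) : {a} ∉ U := fun h =>
  hfree a (Ultrafilter.coe_le_coe.1 (le_pure_iff.2 h))

theorem infinite_of_free (hfree : Free U) : Infinite τ :=
  not_finite_iff_infinite.1 fun _ => (Ultrafilter.eq_pure_of_finite U).elim hfree

theorem notMem_of_mk_lt (hfree : Free U)
    (hcomplete : ∀ 𝒜 : Set (Set τ), (∀ A ∈ 𝒜, A ∈ U) → #𝒜 < #τ → ⋂₀ 𝒜 ∈ U)
    {A : Set τ} (hA : #A < #τ) : A ∉ U := by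
  have h := hcomplete ((fun a => {a}ᶜ) '' A)
    (forall_mem_image.2 fun a _ => Ultrafilter.compl_mem_iff_notMem.2 (singleton_notMem hfree a))
    (mk_image_le.trans_lt hA)
  rwa [sInter_image, ← compl_iUnion₂, biUnion_of_singleton,
    Ultrafilter.compl_mem_iff_notMem] at h

theorem isOpen_setOf_mem (s : Set τ) : IsOpen {x : UltSp U | s ∈ x.1} :=
  (ultrafilter_isOpen_basic s).preimage continuous_subtype_val

theorem isOpen_singleton_ofBase (hfree : Free U) (a : τ) : IsOpen {ofBase U a} := by
  convert isOpen_setOf_mem (U := U) {a}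
  ext x
  rcases eq_pt_or_eq_ofBase x with rfl | ⟨b, rfl⟩
  · exact iff_of_false (pt_ne_ofBase hfree a) (singleton_notMem hfree a)
  · rw [mem_singleton_iff, ofBase_injective.eq_iff, mem_ofPred_eq, ofBase, Ultrafilter.mem_pure,
      mem_singleton_iff]

theorem tendsto_ofBase_pt : Tendsto (ofBase U) U (𝓝 (pt U)) :=
  tendsto_subtype_rng.2 (Ultrafilter.tendsto_pure_self U)

theorem isOpen_iff (hfree : Free U) {S : Set (UltSp U)} :
    IsOpen S ↔ (pt U ∈ S → ofBase U ⁻¹' S ∈ U) := by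
  refine ⟨fun hS hpt => tendsto_ofBase_pt (hS.mem_nhds hpt),
    fun h => isOpen_iff_mem_nhds.2 fun x hx => ?_⟩
  rcases eq_pt_or_eq_ofBase x with rfl | ⟨a, rfl⟩
  · refine mem_of_superset ((isOpen_setOf_mem _).mem_nhds (h hx)) fun y hy => ?_
    rcases eq_pt_or_eq_ofBase y with rfl | ⟨b, rfl⟩
    · exact hx
    · exact Ultrafilter.mem_pure.1 hy
  · exact mem_of_superset ((isOpen_singleton_ofBase hfree a).mem_nhds rfl)
      (singleton_subset_iff.2 hx)

theorem isClosed_iff (hfree : Free U) {S : Set (UltSp U)} :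
    IsClosed S ↔ (ofBase U ⁻¹' S ∈ U → pt U ∈ S) := by
  rw [← isOpen_compl_iff, isOpen_iff hfree, preimage_compl, Ultrafilter.compl_mem_iff_notMem,
    mem_compl_iff, not_imp_not]

theorem pt_mem_closure (hfree : Free U) {S : Set (UltSp U)} (hS : ofBase U ⁻¹' S ∈ U) :
    pt U ∈ closure S :=
  (isClosed_iff hfree).1 isClosed_closure (mem_of_superset hS (preimage_mono subset_closure))

theorem isOpen_closure (hfree : Free U) {W : Set (UltSp U)} (hW : IsOpen W) :
    IsOpen (closure W) := by
  refine (isOpen_iff hfree).2 fun hpt => ?_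
  by_cases hWU : ofBase U ⁻¹' W ∈ U
  · exact mem_of_superset hWU (preimage_mono subset_closure)
  · have hW' : IsClosed W := (isClosed_iff hfree).2 (absurd · hWU)
    rw [hW'.closure_eq] at hpt
    exact absurd ((isOpen_iff hfree).1 hW hpt) hWU

theorem isClopen_of_isRegClosed (hfree : Free U) {C : Set (UltSp U)} (hC : IsRegClosed C) :
    IsClopen C := by
  rw [← hC]
  exact ⟨isClosed_closure, isOpen_closure hfree isOpen_interior⟩

theorem isOpen_iInter_nat (hfree : Free U) [CountableInterFilter (U : Filter τ)]
    {S : ℕ → Set (UltSp U)} (hS : ∀ n, IsOpen (S n)) : IsOpen (⋂ n, S n) := by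
  refine (isOpen_iff hfree).2 fun hpt => ?_
  rw [preimage_iInter]
  exact countable_iInter_mem.2 fun n => (isOpen_iff hfree).1 (hS n) (mem_iInter.1 hpt n)

theorem isClosed_iUnion_nat (hfree : Free U) [CountableInterFilter (U : Filter τ)]
    {S : ℕ → Set (UltSp U)} (hS : ∀ n, IsClosed (S n)) : IsClosed (⋃ n, S n) := by
  rw [← isOpen_compl_iff, compl_iUnion]
  exact isOpen_iInter_nat hfree fun n => (hS n).isOpen_compl

theorem isCountKappaMetric_rho (hfree : Free U) [CountableInterFilter (U : Filter τ)] :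
    IsCountKappaMetric (rho U) :=
  isCountKappaMetric_indicator_compl (fun _ => isClopen_of_isRegClosed hfree)
    (fun _ => isClosed_iUnion_nat hfree)

theorem not_isKappaMetric (hfree : Free U) [CountableInterFilter (U : Filter τ)]
    (hsmall : ∀ A : Set τ, #A < #τ → A ∉ U) (ρ : UltSp U → Set (UltSp U) → ℝ) :
    ¬ IsKappaMetric ρ := by
  intro hρ
  have : Infinite τ := infinite_of_free hfree
  obtain ⟨e⟩ : Nonempty (τ ≃ (#τ).ord.ToType) := Cardinal.eq.1 (mk_ord_toType _).symm
  have : Nonempty (#τ).ord.ToType := e.symm.nonempty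
  have hseg : ∀ i, e ⁻¹' Iic i ∉ U := fun i => hsmall _ <| by
    rw [mk_preimage_equiv]
    simpa using mk_Iic_lt i (by simp) (by simp)
  let C i : Set (UltSp U) := ofBase U '' (e ⁻¹' Iic i)
  have htrace : ∀ i, ofBase U ⁻¹' C i = e ⁻¹' Iic i := fun _ =>
    preimage_image_eq _ ofBase_injective
  have hC : ∀ i, IsClopen (C i) := fun i =>
    ⟨(isClosed_iff hfree).2 fun h => absurd (htrace i ▸ h) (hseg i),
     (isOpen_iff hfree).2 fun ⟨a, _, ha⟩ => absurd ha.symm (pt_ne_ofBase hfree a)⟩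
  have hmono : Monotone C := fun i j hij => image_mono (preimage_mono (Iic_subset_Iic.2 hij))
  have hpt : pt U ∈ closure (⋃ i, C i) :=
    pt_mem_closure hfree <| univ_mem' fun b =>
      mem_iUnion.2 ⟨e b, b, mem_preimage.2 self_mem_Iic, rfl⟩
  obtain ⟨i, a, -, ha⟩ := hρ.exists_mem_of_mem_closure_iUnion (fun i => (hC i).isRegClosed)
    hmono (Ultrafilter.bddAbove_range_of_preimage_Iic_notMem hseg) hpt
  exact pt_ne_ofBase hfree a ha.symm

end UltSp

end UltSpace

/-- for measurable τ and τ-complete free U, the space X = τ ∪ {U} is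
countably κ-metrizable but not κ-metrizable. -/
theorem stmt4 {τ : Type*} (U : Ultrafilter τ)
    (huncount : Cardinal.aleph0 < Cardinal.mk τ)
    (hfree : UltSp.Free U)
    (hcomplete : ∀ 𝒜 : Set (Set τ), (∀ A ∈ 𝒜, A ∈ U) →
      Cardinal.mk 𝒜 < Cardinal.mk τ → ⋂₀ 𝒜 ∈ U) :
    (∃ ρ : UltSp U → Set (UltSp U) → ℝ, IsCountKappaMetric ρ) ∧
    ¬ ∃ ρ' : UltSp U → Set (UltSp U) → ℝ, IsKappaMetric ρ' := by
  have := Ultrafilter.countableInterFilter_of_complete huncount hcomplete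
  exact ⟨⟨UltSp.rho U, UltSp.isCountKappaMetric_rho hfree⟩, fun ⟨ρ, hρ⟩ =>
    UltSp.not_isKappaMetric hfree (fun _ => UltSp.notMem_of_mk_lt hfree hcomplete) ρ hρ⟩
end

section
/- Let X be a countably κ-metrizable space and P ⊆ RO(X) a Q-admissible family. For the equivalence relation x ∼_P y (meaning x ∈ V ↔ y ∈ V for all V ∈ P), the equivalence class of x equals the intersection ⋂{cl V : x ∈ V ∈ P}. -/
open Set Topology

/-!
For `V ∈ P` the complement `Vᶜ = cl (int Vᶜ)` is regular closed, so `f = ρ(·, Vᶜ)` is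
continuous and vanishes exactly off `V`. If `y` lies in the closure of every member of `P`
containing `x`, then `f y = f x`: otherwise a rational `q` strictly between them gives a member
`int f⁻¹(-∞, q]` or `int f⁻¹[q, ∞)` of `P` containing `x` whose closure misses `y`.
Hence `x ∈ V ↔ y ∈ V`.
-/

theorem IsRegOpen.isRegClosed_compl {X : Type*} [TopologicalSpace X] {V : Set X}
    (hV : IsRegOpen V) : IsRegClosed Vᶜ := by
  rw [IsRegClosed, interior_compl, closure_compl, hV]

section SeparationByRationalLevels

variable {X : Type*} [TopologicalSpace X] {f : X → ℝ} {S : Set (Set X)} {x y : X}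

theorem le_of_forall_mem_closure_of_interior_preimage_Iic_mem (hf : Continuous f)
    (hS : ∀ q : ℚ, interior (f ⁻¹' Iic (q : ℝ)) ∈ S)
    (h : ∀ W ∈ S, x ∈ W → y ∈ closure W) : f y ≤ f x := by
  by_contra! hlt
  obtain ⟨q, hxq, hqy⟩ := exists_rat_btwn hlt
  have hxW : x ∈ interior (f ⁻¹' Iic (q : ℝ)) :=
    interior_maximal (preimage_mono Iio_subset_Iic_self) (isOpen_Iio.preimage hf) hxq
  have hyq : f y ≤ q :=
    closure_minimal interior_subset (isClosed_Iic.preimage hf) (h _ (hS q) hxW)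
  exact hyq.not_gt hqy

theorem eq_of_forall_mem_closure_of_interior_preimage_mem (hf : Continuous f)
    (hIic : ∀ q : ℚ, interior (f ⁻¹' Iic (q : ℝ)) ∈ S)
    (hIci : ∀ q : ℚ, interior (f ⁻¹' Ici (q : ℝ)) ∈ S)
    (h : ∀ W ∈ S, x ∈ W → y ∈ closure W) : f y = f x := by
  refine le_antisymm (le_of_forall_mem_closure_of_interior_preimage_Iic_mem hf hIic h) ?_
  have hIci' : ∀ q : ℚ, interior ((-f) ⁻¹' Iic (q : ℝ)) ∈ S := fun q => by
    have hpre : (-f) ⁻¹' Iic (q : ℝ) = f ⁻¹' Ici ((-q : ℚ) : ℝ) := by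
      ext z
      simp [neg_le]
    exact hpre ▸ hIci (-q)
  simpa using le_of_forall_mem_closure_of_interior_preimage_Iic_mem hf.neg hIci' h

end SeparationByRationalLevels

/-- the ∼_P-class of x is ⋂{cl V : x ∈ V ∈ P}. -/
theorem stmt8 {X : Type*} [TopologicalSpace X] (ρ : X → Set X → ℝ)
    (hρ : IsCountKappaMetric ρ) (P : Set (Set X)) (hP : QAdmissible ρ P) (x : X) :
    {y | ∀ V ∈ P, (x ∈ V ↔ y ∈ V)} = ⋂₀ ((fun V => closure V) '' {V ∈ P | x ∈ V}) := by
  obtain ⟨hreg, hlevels, hcompl, -⟩ := hP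
  ext y
  simp only [mem_ofPred_eq, mem_sInter]
  constructor
  · rintro h _ ⟨V, ⟨hV, hxV⟩, rfl⟩
    exact subset_closure ((h V hV).1 hxV)
  · intro h V hV
    have hC : closure (interior Vᶜ) = Vᶜ := (hreg V hV).isRegClosed_compl
    have hlevels' := hlevels _ (hcompl V hV)
    rw [hC] at hlevels'
    have hρxy : ρ y Vᶜ = ρ x Vᶜ :=
      eq_of_forall_mem_closure_of_interior_preimage_mem (hρ.k3 _ hC)
        (fun q => (hlevels' q).1) (fun q => (hlevels' q).2)
        (fun W hW hxW => h _ ⟨W, ⟨hW, hxW⟩, rfl⟩)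
    have hmem : ∀ z, z ∈ V ↔ ρ z Vᶜ ≠ 0 := fun z => by
      rw [Ne, hρ.k1 z _ hC, mem_compl_iff, not_not]
    rw [hmem, hmem, hρxy]
end

section
/- Let X be a pseudocompact countably κ-metrizable space and P a countable Q-admissible family of regular open sets with X ∈ P. Then the quotient space X_P = {[x]_P : x ∈ X}, topologized by the base {q[V] : V ∈ P} where q(x) = [x]_P, is a compact metrizable space. -/
open Set Topology

section AuxProof

open TopologicalSpace

variable {X : Type*} [TopologicalSpace X]

lemma myRegClosed (A : Set X) : IsRegClosed (closure (interior A)) := by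
  refine subset_antisymm ?_ ?_
  · calc closure (interior (closure (interior A)))
        ⊆ closure (closure (interior A)) := closure_mono interior_subset
      _ = closure (interior A) := closure_closure
  · exact closure_mono (interior_maximal subset_closure isOpen_interior)

/-- The basic separating functions. -/
noncomputable def fF (ρ : X → Set X → ℝ) (V : Set X) : X → ℝ :=
  fun x => ρ x (closure (interior Vᶜ))

lemma fF_cont {ρ : X → Set X → ℝ} (hρ : IsCountKappaMetric ρ) (V : Set X) :
    Continuous (fF ρ V) := hρ.k3 _ (myRegClosed _)

lemma closure_interior_compl {V : Set X} (hV : IsRegOpen V) :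
    closure (interior Vᶜ) = Vᶜ := by
  rw [interior_compl, closure_compl, hV]

lemma fF_pos_iff {ρ : X → Set X → ℝ} (hρ : IsCountKappaMetric ρ) {V : Set X}
    (hV : IsRegOpen V) (x : X) : 0 < fF ρ V x ↔ x ∈ V := by
  have hC : IsRegClosed (closure (interior Vᶜ)) := myRegClosed _
  have h0 := hρ.k1 x _ hC
  have hnn := hρ.nonneg x _ hC
  have hmem : x ∈ closure (interior Vᶜ) ↔ x ∉ V := by
    rw [closure_interior_compl hV]; exact Iff.rfl
  have h0' : fF ρ V x = 0 ↔ x ∉ V := h0.trans hmem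
  constructor
  · intro h
    by_contra hx
    have : fF ρ V x = 0 := h0'.mpr hx
    rw [this] at h; exact lt_irrefl _ h
  · intro hx
    rcases hnn.lt_or_eq with h | h
    · exact h
    · exact absurd (h0'.mp h.symm) (fun hc => hc hx)

lemma fF_descend {ρ : X → Set X → ℝ} (hρ : IsCountKappaMetric ρ) {P : Set (Set X)}
    (hP : QAdmissible ρ P) {V : Set X} (hV : V ∈ P) {x y : X}
    (h : ∀ U ∈ P, (x ∈ U ↔ y ∈ U)) : fF ρ V x = fF ρ V y := by
  have hW : interior Vᶜ ∈ P := hP.2.2.1 V hV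
  have key : ∀ a b : X, (∀ U ∈ P, (a ∈ U ↔ b ∈ U)) → fF ρ V a ≤ fF ρ V b := by
    intro a b hab
    by_contra hlt
    push_neg at hlt
    obtain ⟨q, hq1, hq2⟩ := exists_rat_btwn hlt
    have hA : interior (fF ρ V ⁻¹' Set.Iic (q : ℝ)) ∈ P := (hP.2.1 _ hW q).1
    have hbA : b ∈ interior (fF ρ V ⁻¹' Set.Iic (q : ℝ)) :=
      interior_maximal (Set.preimage_mono Set.Iio_subset_Iic_self)
        ((fF_cont hρ V).isOpen_preimage _ isOpen_Iio) (show fF ρ V b < (q : ℝ) from hq1)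
    have haA : a ∈ interior (fF ρ V ⁻¹' Set.Iic (q : ℝ)) := (hab _ hA).mpr hbA
    have haA' : a ∈ fF ρ V ⁻¹' Set.Iic (q : ℝ) := interior_subset haA
    have : fF ρ V a ≤ (q : ℝ) := haA'
    linarith
  exact le_antisymm (key x y h) (key y x (fun U hU => (h U hU).symm))

/-- The evaluation map into `ℝ^P`. -/
noncomputable def eMap (ρ : X → Set X → ℝ) (hρ : IsCountKappaMetric ρ) (P : Set (Set X))
    (hP : QAdmissible ρ P) : XP P → (↥P → ℝ) :=
  fun c V => Quotient.lift (fF ρ V.1)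
    (fun _ _ hab => fF_descend hρ hP V.2 hab) c

end AuxProof

/-- Continuous images of pseudocompact spaces in metrizable spaces are compact
(given that the closure of the range is compact). -/
lemma range_isCompact_of_pseudocompact {X Y : Type*} [TopologicalSpace X] [TopologicalSpace Y]
    [TopologicalSpace.MetrizableSpace Y] (hpc : Pseudocompact X) {Φ : X → Y}
    (hΦ : Continuous Φ) (hK : IsCompact (closure (Set.range Φ))) :
    IsCompact (Set.range Φ) := by
  letI : MetricSpace Y := TopologicalSpace.metrizableSpaceMetric Y
  have hcl : closure (Set.range Φ) ⊆ Set.range Φ := by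
    intro a ha
    by_contra han
    have hdpos : ∀ x : X, 0 < dist (Φ x) a := by
      intro x
      rcases eq_or_lt_of_le (dist_nonneg (x := Φ x) (y := a)) with h | h
      · exact absurd (dist_eq_zero.mp h.symm ▸ Set.mem_range_self x) han
      · exact h
    have hcont : Continuous fun x => (dist (Φ x) a)⁻¹ :=
      ((hΦ.dist continuous_const).inv₀ fun x => (hdpos x).ne')
    obtain ⟨M, hM⟩ := hpc _ hcont
    have hne : (Set.range Φ).Nonempty := by
      rcases (closure_nonempty_iff.mp ⟨a, ha⟩) with h; exact h
    obtain ⟨b, x0, rfl⟩ := hne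
    have hM0 : 0 < M := lt_of_lt_of_le (inv_pos.mpr (hdpos x0))
      (le_trans (le_abs_self _) (hM x0))
    obtain ⟨b, ⟨x, rfl⟩, hdb⟩ := Metric.mem_closure_iff.mp ha _ (inv_pos.mpr hM0)
    have h1 : (dist (Φ x) a)⁻¹ ≤ M := le_trans (le_abs_self _) (hM x)
    have h2 : M⁻¹ ≤ dist (Φ x) a := by
      rw [inv_le_comm₀ hM0 (hdpos x)]
      exact h1
    rw [dist_comm] at hdb
    linarith
  exact (subset_antisymm subset_closure hcl) ▸ hK

/-- for pseudocompact countably κ-metrizable X and countable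
Q-admissible P (with X ∈ P), the quotient X_P is compact and metrizable. -/
theorem stmt10 {X : Type*} [TopologicalSpace X] (hpc : Pseudocompact X)
    (ρ : X → Set X → ℝ) (hρ : IsCountKappaMetric ρ)
    (P : Set (Set X)) (hP : QAdmissible ρ P) (hPc : P.Countable)
    (huniv : Set.univ ∈ P) :
    @CompactSpace (XP P) (topXP P) ∧
      @TopologicalSpace.MetrizableSpace (XP P) (topXP P) := by
  classical
  letI tQ : TopologicalSpace (XP P) := topXP P
  haveI : Countable ↥P := hPc.to_subtype
  haveI : TopologicalSpace.MetrizableSpace (↥P → ℝ) := UniformSpace.metrizableSpace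
  set e := eMap ρ hρ P hP with he
  -- preimage formula for coordinates of e
  have hpre : ∀ (V : ↥P) (s : Set ℝ),
      (fun c => e c V) ⁻¹' s = qP P '' (fF ρ V.1 ⁻¹' s) := by
    intro V s
    ext c
    obtain ⟨x, rfl⟩ := Quotient.exists_rep c
    show e (qP P x) V ∈ s ↔ qP P x ∈ qP P '' (fF ρ V.1 ⁻¹' s)
    constructor
    · intro h
      exact ⟨x, h, rfl⟩
    · rintro ⟨z, hz, hq⟩
      have hzx : fF ρ V.1 z = fF ρ V.1 x := fF_descend hρ hP V.2 (Quotient.exact hq)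
      rw [Set.mem_preimage] at hz
      show fF ρ V.1 x ∈ s
      rwa [hzx] at hz
  -- generators are open
  have hgenopen : ∀ {U : Set X}, U ∈ P → IsOpen (qP P '' U) := by
    intro U hU
    exact TopologicalSpace.isOpen_generateFrom_of_mem ⟨U, hU, rfl⟩
  -- coordinate preimages of rays are open
  have hIoi : ∀ (V : ↥P) (a : ℝ), IsOpen ((fun c => e c V) ⁻¹' Set.Ioi a) := by
    intro V a
    rw [hpre]
    have hWP : interior V.1ᶜ ∈ P := hP.2.2.1 _ V.2
    have hUnion : fF ρ V.1 ⁻¹' Set.Ioi a =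
        ⋃ (q : ℚ) (_ : a < (q : ℝ)), interior (fF ρ V.1 ⁻¹' Set.Ici (q : ℝ)) := by
      ext z
      simp only [Set.mem_preimage, Set.mem_Ioi, Set.mem_iUnion]
      constructor
      · intro hz
        obtain ⟨q, hq1, hq2⟩ := exists_rat_btwn hz
        exact ⟨q, hq1, interior_maximal (Set.preimage_mono Set.Ioi_subset_Ici_self)
          ((fF_cont hρ _).isOpen_preimage _ isOpen_Ioi)
          (show z ∈ fF ρ V.1 ⁻¹' Set.Ioi (q : ℝ) from hq2)⟩
      · rintro ⟨q, hq, hmem⟩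
        have hz' : z ∈ fF ρ V.1 ⁻¹' Set.Ici (q : ℝ) := interior_subset hmem
        exact lt_of_lt_of_le hq hz'
    rw [hUnion, Set.image_iUnion]
    refine isOpen_iUnion fun q => ?_
    rw [Set.image_iUnion]
    refine isOpen_iUnion fun hq => ?_
    exact hgenopen (hP.2.1 _ hWP q).2
  have hIio : ∀ (V : ↥P) (a : ℝ), IsOpen ((fun c => e c V) ⁻¹' Set.Iio a) := by
    intro V a
    rw [hpre]
    have hWP : interior V.1ᶜ ∈ P := hP.2.2.1 _ V.2
    have hUnion : fF ρ V.1 ⁻¹' Set.Iio a =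
        ⋃ (q : ℚ) (_ : (q : ℝ) < a), interior (fF ρ V.1 ⁻¹' Set.Iic (q : ℝ)) := by
      ext z
      simp only [Set.mem_preimage, Set.mem_Iio, Set.mem_iUnion]
      constructor
      · intro hz
        obtain ⟨q, hq1, hq2⟩ := exists_rat_btwn hz
        exact ⟨q, hq2, interior_maximal (Set.preimage_mono Set.Iio_subset_Iic_self)
          ((fF_cont hρ _).isOpen_preimage _ isOpen_Iio)
          (show z ∈ fF ρ V.1 ⁻¹' Set.Iio (q : ℝ) from hq1)⟩
      · rintro ⟨q, hq, hmem⟩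
        have hz' : z ∈ fF ρ V.1 ⁻¹' Set.Iic (q : ℝ) := interior_subset hmem
        exact lt_of_le_of_lt hz' hq
    rw [hUnion, Set.image_iUnion]
    refine isOpen_iUnion fun q => ?_
    rw [Set.image_iUnion]
    refine isOpen_iUnion fun hq => ?_
    exact hgenopen (hP.2.1 _ hWP q).1
  -- coordinates are continuous
  have hcoordcont : ∀ V : ↥P, Continuous fun c => e c V := by
    intro V
    rw [continuous_iff_le_induced, OrderTopology.topology_eq_generate_intervals (α := ℝ),
      Preorder.topology, induced_generateFrom_eq]
    refine le_generateFrom ?_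
    rintro s ⟨s', ⟨a, rfl | rfl⟩, rfl⟩
    · exact hIoi V a
    · exact hIio V a
  -- injective
  have hinj : Function.Injective e := by
    intro c d h
    obtain ⟨x, rfl⟩ := Quotient.exists_rep c
    obtain ⟨y, rfl⟩ := Quotient.exists_rep d
    refine Quotient.sound fun U hU => ?_
    have hval : fF ρ U x = fF ρ U y := congrFun h ⟨U, hU⟩
    rw [← fF_pos_iff hρ (hP.1 U hU) x, ← fF_pos_iff hρ (hP.1 U hU) y, hval]
  -- inducing
  have hind : tQ = TopologicalSpace.induced e inferInstance := by
    refine le_antisymm (continuous_iff_le_induced.mp (continuous_pi hcoordcont)) ?_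
    show TopologicalSpace.induced e _ ≤ TopologicalSpace.generateFrom _
    refine le_generateFrom ?_
    rintro s ⟨U, hU, rfl⟩
    have hU' : U = fF ρ U ⁻¹' Set.Ioi (0 : ℝ) := by
      ext z
      exact (fF_pos_iff hρ (hP.1 U hU) z).symm
    have himg : qP P '' U = e ⁻¹' ((fun p : ↥P → ℝ => p ⟨U, hU⟩) ⁻¹' Set.Ioi (0 : ℝ)) := by
      conv_lhs => rw [hU']
      rw [← hpre ⟨U, hU⟩ (Set.Ioi 0)]
      rfl
    rw [show (fun V => qP P '' V) U = qP P '' U from rfl, himg]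
    exact isOpen_induced (isOpen_Ioi.preimage (continuous_apply _))
  have hemb : Topology.IsEmbedding e := ⟨⟨hind⟩, hinj⟩
  -- compactness of the range
  set Φ : X → (↥P → ℝ) := fun x V => fF ρ V.1 x with hΦdef
  have hΦcont : Continuous Φ := continuous_pi fun V => fF_cont hρ _
  choose M hM using fun V : ↥P => hpc (fF ρ V.1) (fF_cont hρ _)
  have hsubB : Set.range Φ ⊆ Set.univ.pi fun V => Set.Icc (-(M V)) (M V) := by
    rintro _ ⟨x, rfl⟩ V _
    exact abs_le.mp (hM V x)
  have hBcomp : IsCompact (Set.univ.pi fun V : ↥P => Set.Icc (-(M V)) (M V)) :=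
    isCompact_univ_pi fun V => isCompact_Icc
  have hclscomp : IsCompact (closure (Set.range Φ)) :=
    hBcomp.of_isClosed_subset isClosed_closure (closure_minimal hsubB hBcomp.isClosed)
  have hrangecomp : IsCompact (Set.range Φ) :=
    range_isCompact_of_pseudocompact hpc hΦcont hclscomp
  have hrange_e : Set.range e = Set.range Φ := by
    ext p
    constructor
    · rintro ⟨c, rfl⟩
      obtain ⟨x, rfl⟩ := Quotient.exists_rep c
      exact ⟨x, rfl⟩
    · rintro ⟨x, rfl⟩
      exact ⟨qP P x, rfl⟩
  constructor
  · rw [← isCompact_univ_iff, hemb.isCompact_iff, Set.image_univ, hrange_e]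
    exact hrangecomp
  · exact hemb.metrizableSpace
end
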